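/- arXiv:1012.4998 — 2 statements merged into one kernel-verified Lean document; each statement's English description precedes it below -/
import Mathlib

section
/- On the space of Cl(0,m)-valued polynomials, the commutator identities [∂^+, x^{2j}] = -2j x^{2(j-1)}(x∧) and [∂^-, x^{2j}] = -2j x^{2(j-1)}(x•) hold, where x^2 denotes multiplication by the Clifford square of the vector variable (equal to -|x|^2). -/
noncomputable section
open scoped TensorProduct
open CliffordAlgebra MvPolynomial

/-- The quadratic form of signature (0,m): Q(x) = -|x|². -/
def Qf (m : ℕ) : QuadraticForm ℝ (Fin m → ℝ) :=
  - QuadraticMap.weightedSumSquares ℝ (fun _ : Fin m => (1 : ℝ))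

/-- The real Clifford algebra Cl(0,m). -/
abbrev Cl (m : ℕ) := CliffordAlgebra (Qf m)

/-- The generators e₁,…,e_m. -/
def e (m : ℕ) (i : Fin m) : Cl m := CliffordAlgebra.ι (Qf m) (Pi.single i 1)

/-- Left outer (wedge) multiplication by `c`:  v ↦ (1/2)(c v + α(v) c). -/
def wedgeL (m : ℕ) (c : Cl m) : Cl m →ₗ[ℝ] Cl m :=
  (1/2 : ℝ) • (LinearMap.mulLeft ℝ c +
    (LinearMap.mulRight ℝ c) ∘ₗ (involute (Q := Qf m)).toLinearMap)

/-- Left inner (dot) multiplication by `c`:  v ↦ (1/2)(c v - α(v) c). -/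
def dotL (m : ℕ) (c : Cl m) : Cl m →ₗ[ℝ] Cl m :=
  (1/2 : ℝ) • (LinearMap.mulLeft ℝ c -
    (LinearMap.mulRight ℝ c) ∘ₗ (involute (Q := Qf m)).toLinearMap)

/-- Scalar polynomials on ℝ^m. -/
abbrev Pm (m : ℕ) := MvPolynomial (Fin m) ℝ

/-- The space P* of Cl(0,m)-valued polynomials on ℝ^m. -/
abbrev MS (m : ℕ) := Pm m ⊗[ℝ] Cl m

/-- Build an operator on Cl-valued polynomials from operators on each factor. -/
def op (m : ℕ) (f : Pm m →ₗ[ℝ] Pm m) (g : Cl m →ₗ[ℝ] Cl m) : Module.End ℝ (MS m) :=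
  TensorProduct.map f g

/-- The operator (x∧) of outer multiplication by the vector variable. -/
def xWedge (m : ℕ) : Module.End ℝ (MS m) :=
  ∑ j : Fin m, op m (LinearMap.mulLeft ℝ (X j)) (wedgeL m (e m j))

/-- The operator (x•) of inner multiplication by the vector variable. -/
def xDot (m : ℕ) : Module.End ℝ (MS m) :=
  ∑ j : Fin m, op m (LinearMap.mulLeft ℝ (X j)) (dotL m (e m j))

/-- Left Clifford multiplication by the vector variable x. -/
def Xmul (m : ℕ) : Module.End ℝ (MS m) :=
  ∑ j : Fin m, op m (LinearMap.mulLeft ℝ (X j)) (LinearMap.mulLeft ℝ (e m j))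

/-- The Dirac operator ∂ = Σ e_j ∂_{x_j}. -/
def Dirac (m : ℕ) : Module.End ℝ (MS m) :=
  ∑ j : Fin m, op m (pderiv j).toLinearMap (LinearMap.mulLeft ℝ (e m j))

/-- The exterior part ∂⁺ of the Dirac operator. -/
def dplus (m : ℕ) : Module.End ℝ (MS m) :=
  ∑ j : Fin m, op m (pderiv j).toLinearMap (wedgeL m (e m j))

/-- The interior part ∂⁻ of the Dirac operator. -/
def dminus (m : ℕ) : Module.End ℝ (MS m) :=
  ∑ j : Fin m, op m (pderiv j).toLinearMap (dotL m (e m j))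

/-- The Euler operator E = Σ x_j ∂_{x_j}. -/
def Euler (m : ℕ) : Module.End ℝ (MS m) :=
  ∑ j : Fin m, op m (LinearMap.mulLeft ℝ (X j) ∘ₗ (pderiv j).toLinearMap) LinearMap.id

/-- The fermionic Euler operator ∂⁺⌋ = -Σ (e_j∧)(e_j•). -/
def fermPlus (m : ℕ) : Module.End ℝ (MS m) :=
  - ∑ j : Fin m, op m LinearMap.id (wedgeL m (e m j) ∘ₗ dotL m (e m j))

/-- The fermionic Euler operator ∂⁻⌋ = -Σ (e_j•)(e_j∧). -/
def fermMinus (m : ℕ) : Module.End ℝ (MS m) :=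
  - ∑ j : Fin m, op m LinearMap.id (dotL m (e m j) ∘ₗ wedgeL m (e m j))

/-- The Laplacian Δ = Σ ∂_{x_j}². -/
def Lap (m : ℕ) : Module.End ℝ (MS m) :=
  ∑ j : Fin m, op m ((pderiv j).toLinearMap ∘ₗ (pderiv j).toLinearMap) LinearMap.id

/-- Multiplication by the Clifford square x² = -(x₁²+⋯+x_m²) of the vector variable. -/
def Mx2 (m : ℕ) : Module.End ℝ (MS m) :=
  op m (LinearMap.mulLeft ℝ (-(∑ j : Fin m, (X j : Pm m) ^ 2))) LinearMap.id

/-- The space Cl^s of s-vectors: the span of products of s distinct generators. -/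
def clGrade (m s : ℕ) : Submodule ℝ (Cl m) :=
  Submodule.span ℝ
    {x | ∃ l : List (Fin m), l.length = s ∧ l.Nodup ∧ x = (l.map (e m)).prod}

/-- The space P_k^s of k-homogeneous s-vector valued polynomials. -/
def Pks (m k s : ℕ) : Submodule ℝ (MS m) :=
  LinearMap.range (TensorProduct.map
    (MvPolynomial.homogeneousSubmodule (Fin m) ℝ k).subtype (clGrade m s).subtype)

/-- The space of s-vector valued polynomials (no homogeneity). -/
def PsVal (m s : ℕ) : Submodule ℝ (MS m) :=
  LinearMap.range (TensorProduct.map (LinearMap.id : Pm m →ₗ[ℝ] Pm m) (clGrade m s).subtype)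

/-- Homogeneous solutions of the Hodge–de Rham system: ∂⁺P = 0 and ∂⁻P = 0. -/
def Hks (m k s : ℕ) : Submodule ℝ (MS m) :=
  Pks m k s ⊓ LinearMap.ker (dplus m) ⊓ LinearMap.ker (dminus m)

/-- Homogeneous s-vector valued monogenic polynomials: ∂P = 0. -/
def HksD (m k s : ℕ) : Submodule ℝ (MS m) :=
  Pks m k s ⊓ LinearMap.ker (Dirac m)

/-- Ker_k^s ∂⁺. -/
def KerP (m k s : ℕ) : Submodule ℝ (MS m) :=
  Pks m k s ⊓ LinearMap.ker (dplus m)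

/-- Ker_k^s ∂⁻. -/
def KerM (m k s : ℕ) : Submodule ℝ (MS m) :=
  Pks m k s ⊓ LinearMap.ker (dminus m)

end

/-! By the Leibniz rule, `[∂_{x_i}, x²] = -2 x_i` for x² = -Σ x_k², so whatever Clifford factors
`g_i` accompany the derivatives, `[Σ ∂_{x_i} ⊗ g_i, x²] = -2 Σ x_i ⊗ g_i`, which commutes with x².
In any ring, `[a, b^j] = j b^(j-1) [a, b]` as soon as `b` commutes with `[a, b]`. -/

open scoped TensorProduct
open CliffordAlgebra MvPolynomial

theorem mul_pow_sub_pow_mul_of_commute {R : Type*} [Ring R] {a b c : R}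
    (hab : a * b - b * a = c) (hbc : Commute b c) (n : ℕ) :
    a * b ^ n - b ^ n * a = n • (b ^ (n - 1) * c) := by
  induction n with
  | zero => simp
  | succ n ih =>
    have hsplit : a * b ^ (n + 1) - b ^ (n + 1) * a
        = (a * b ^ n - b ^ n * a) * b + b ^ n * (a * b - b * a) := by
      simp only [pow_succ]; noncomm_ring
    have hshift : n • (b ^ (n - 1) * c) * b = n • (b ^ n * c) := by
      rcases n with _ | n
      · simp
      · rw [smul_mul_assoc, mul_assoc, ← hbc.eq, ← mul_assoc, ← pow_succ, Nat.add_sub_cancel]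
    rw [hsplit, ih, hab, hshift, Nat.add_sub_cancel, succ_nsmul]

theorem Derivation.toLinearMap_mul_mulLeft_sub {R A : Type*} [CommSemiring R] [CommRing A]
    [Algebra R A] (D : Derivation R A A) (a : A) :
    D.toLinearMap * LinearMap.mulLeft R a - LinearMap.mulLeft R a * D.toLinearMap
      = LinearMap.mulLeft R (D a) := by
  ext p
  simp only [LinearMap.sub_apply, Module.End.mul_apply, LinearMap.mulLeft_apply,
    Derivation.coeFn_coe, Derivation.leibniz, smul_eq_mul]
  ring

theorem TensorProduct.map_mul_map_one_sub {R M N : Type*} [CommRing R] [AddCommGroup M]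
    [AddCommGroup N] [Module R M] [Module R N] (d f : Module.End R M) (g : Module.End R N) :
    map d g * map f 1 - map f 1 * map d g = map (d * f - f * d) g := by
  rw [← TensorProduct.map_mul, ← TensorProduct.map_mul, mul_one, one_mul]
  ext p c
  simp [sub_tmul]

theorem MvPolynomial.pderiv_sum_X_sq {σ R : Type*} [Fintype σ] [DecidableEq σ] [CommSemiring R]
    (i : σ) : pderiv i (∑ k, (X k : MvPolynomial σ R) ^ 2) = 2 * X i := by
  simp [pderiv_X, Pi.single_apply, mul_ite, Finset.sum_ite_eq']

section
variable {m : ℕ} (g : Fin m → Module.End ℝ (Cl m))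

theorem sum_op_pderiv_mul_Mx2_sub :
    (∑ i, op m (pderiv i).toLinearMap (g i)) * Mx2 m
        - Mx2 m * ∑ i, op m (pderiv i).toLinearMap (g i)
      = (-2 : ℝ) • ∑ i, op m (LinearMap.mulLeft ℝ (X i)) (g i) := by
  rw [Finset.sum_mul, Finset.mul_sum, Finset.smul_sum,
    ← Finset.sum_sub_distrib (G := Module.End ℝ (MS m))]
  refine Finset.sum_congr rfl fun i _ => ?_
  have hmul : LinearMap.mulLeft ℝ (pderiv i (-(∑ k : Fin m, (X k : Pm m) ^ 2)))
      = (-2 : ℝ) • LinearMap.mulLeft ℝ (X i) := by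
    refine LinearMap.ext fun p => ?_
    rw [map_neg, pderiv_sum_X_sq]
    simp only [LinearMap.mulLeft_apply, LinearMap.smul_apply, smul_eq_C_mul, map_neg,
      map_ofNat]
    ring
  rw [Mx2, op, op, op, ← Module.End.one_eq_id, TensorProduct.map_mul_map_one_sub,
    Derivation.toLinearMap_mul_mulLeft_sub, hmul, TensorProduct.map_smul_left]

theorem commute_Mx2_sum_op_mulLeft_X :
    Commute (Mx2 m) (∑ i, op m (LinearMap.mulLeft ℝ (X i)) (g i)) :=
  Commute.sum_right _ _ _ fun i _ => by
    rw [commute_iff_eq, Mx2, op, op, ← TensorProduct.map_mul, ← TensorProduct.map_mul,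
      ← Module.End.one_eq_id, one_mul, mul_one]
    exact congrArg₂ _ (LinearMap.ext fun p => mul_left_comm _ _ p) rfl

theorem sum_op_pderiv_mul_Mx2_pow_sub (j : ℕ) :
    (∑ i, op m (pderiv i).toLinearMap (g i)) * Mx2 m ^ j
        - Mx2 m ^ j * ∑ i, op m (pderiv i).toLinearMap (g i)
      = -((2 * j : ℝ) • (Mx2 m ^ (j - 1) * ∑ i, op m (LinearMap.mulLeft ℝ (X i)) (g i))) := by
  rw [mul_pow_sub_pow_mul_of_commute (R := Module.End ℝ (MS m)) (sum_op_pderiv_mul_Mx2_sub g)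
      ((commute_Mx2_sum_op_mulLeft_X g).smul_right _) j,
    mul_smul_comm, ← Nat.cast_smul_eq_nsmul ℝ, smul_smul]
  module

end

/-- [∂⁺, x^{2j}] = -2j x^{2(j-1)}(x∧) and [∂⁻, x^{2j}] = -2j x^{2(j-1)}(x•). -/
theorem stmt10 (m j : ℕ) :
    dplus m * Mx2 m ^ j - Mx2 m ^ j * dplus m =
      -((2 * j : ℝ) • (Mx2 m ^ (j - 1) * xWedge m)) ∧
    dminus m * Mx2 m ^ j - Mx2 m ^ j * dminus m =
      -((2 * j : ℝ) • (Mx2 m ^ (j - 1) * xDot m)) :=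
  ⟨sum_op_pderiv_mul_Mx2_pow_sub _ j, sum_op_pderiv_mul_Mx2_pow_sub _ j⟩
end

section
/- If P is a k-homogeneous Cl^s-valued polynomial solution of the Hodge-de Rham system (∂^+P = 0 and ∂^-P = 0) with s ∈ {0, m} and k ≥ 1, then P = 0. Moreover H_0^0 = ℝ and H_0^m = ℝ·e_M where e_M = e_1e_2⋯e_m. -/
/-!
For `s = 0` write `P = p ⊗ 1`, so that `∂⁺P = ∑ⱼ ∂ⱼp ⊗ eⱼ`. Applying `x•` and using
`eⱼ • eᵢ = -δᵢⱼ` turns this into `-(∑ⱼ xⱼ ∂ⱼp) ⊗ 1 = -k P` by Euler's identity, so `∂⁺P = 0`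
forces `P = 0` once `k ≥ 1`.

For `s = m` write `P = p ⊗ e_M`. Since `α(w e_M) eⱼ = -α(w) eⱼ e_M`, right multiplication by the
invertible pseudoscalar `e_M` carries `∂⁺` to `∂⁻`, so `∂⁻(p ⊗ e_M) = 0` gives `∂⁺(p ⊗ 1) = 0`
and the case `s = 0` applies.

In degree `0` the polynomial is constant, and constants are killed by every `∂ⱼ`.
-/

open CliffordAlgebra MvPolynomial TensorProduct

section Generators

variable {m : ℕ}

lemma Qf_single (i : Fin m) : Qf m (Pi.single i 1) = -1 := by
  simp [Qf, QuadraticMap.weightedSumSquares_apply, Pi.single_apply]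

lemma Qf_isOrtho_single {i j : Fin m} (h : i ≠ j) :
    (Qf m).IsOrtho (Pi.single i 1) (Pi.single j 1) := by
  rw [QuadraticMap.isOrtho_def]
  simp only [Qf, _root_.neg_apply, QuadraticMap.weightedSumSquares_apply, one_smul]
  rw [← neg_add, ← Finset.sum_add_distrib]
  congr 1
  refine Finset.sum_congr rfl fun x _ => ?_
  rcases eq_or_ne x i with rfl | hi <;> rcases eq_or_ne x j with rfl | hj <;>
    simp_all

lemma e_mul_self (i : Fin m) : e m i * e m i = -1 := by
  rw [e, ι_sq_scalar, Qf_single, map_neg, map_one]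

lemma e_mul_e_of_ne {i j : Fin m} (h : i ≠ j) : e m i * e m j = -(e m j * e m i) :=
  ι_mul_ι_comm_of_isOrtho (Qf_isOrtho_single h)

lemma involute_e (i : Fin m) : involute (e m i) = -e m i :=
  involute_ι _

lemma isUnit_e (i : Fin m) : IsUnit (e m i) :=
  ⟨⟨e m i, -e m i, by rw [mul_neg, e_mul_self, neg_neg], by rw [neg_mul, e_mul_self, neg_neg]⟩,
    rfl⟩

lemma involute_prod_map_e (l : List (Fin m)) :
    involute (l.map (e m)).prod = (-1 : ℝ) ^ l.length • (l.map (e m)).prod := by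
  have hl : l.map (e m) = (l.map fun i => Pi.single i 1).map (ι (Qf m)) := by
    simp [List.map_map, Function.comp_def, e]
  rw [hl, involute_prod_map_ι, List.length_map]

lemma e_mul_prod_map_e (i : Fin m) (l : List (Fin m)) :
    e m i * (l.map (e m)).prod =
      (-1 : ℝ) ^ l.countP (· ≠ i) • ((l.map (e m)).prod * e m i) := by
  induction l with
  | nil => simp
  | cons a t ih =>
    rcases eq_or_ne a i with rfl | ha
    · have hc : (a :: t).countP (· ≠ a) = t.countP (· ≠ a) := by simp
      rw [hc, List.map_cons, List.prod_cons]
      conv_lhs => rw [ih, mul_smul_comm]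
      simp only [mul_assoc]
    · simp only [List.map_cons, List.prod_cons, List.countP_cons, ne_eq, ha, not_false_eq_true,
        decide_true, if_true, pow_succ, mul_neg_one, neg_smul]
      rw [← mul_assoc, e_mul_e_of_ne ha.symm, neg_mul, mul_assoc, ih, mul_smul_comm, mul_assoc]

lemma prod_map_e_eq_or_eq_neg_of_perm {l l' : List (Fin m)} (h : l.Perm l') (hl : l.Nodup) :
    (l.map (e m)).prod = (l'.map (e m)).prod ∨ (l.map (e m)).prod = -(l'.map (e m)).prod := by
  induction h with
  | nil => exact .inl rfl
  | cons x _ ih =>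
    rcases ih hl.of_cons with h | h <;> simp [h]
  | swap x y t =>
    have hxy : y ≠ x := fun hyx => (List.nodup_cons.mp hl).1 (hyx ▸ List.mem_cons_self)
    right
    simp only [List.map_cons, List.prod_cons, ← mul_assoc, e_mul_e_of_ne hxy, neg_mul]
  | trans h₁ _ ih₁ ih₂ =>
    rcases ih₁ hl with h | h <;> rcases ih₂ (h₁.nodup hl) with h' | h' <;> simp [h, h']

end Generators

section Pseudoscalar

variable {m : ℕ}

noncomputable def eM (m : ℕ) : Cl m := ((List.finRange m).map (e m)).prod

lemma isUnit_eM : IsUnit (eM m) :=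
  List.prod_isUnit fun _ hx => by
    obtain ⟨i, -, rfl⟩ := List.mem_map.mp hx
    exact isUnit_e i

lemma involute_eM : involute (eM m) = (-1 : ℝ) ^ m • eM m := by
  rw [eM, involute_prod_map_e, List.length_finRange]

lemma countP_finRange_ne_add_one (j : Fin m) : (List.finRange m).countP (· ≠ j) + 1 = m := by
  have h1 := List.length_eq_countP_add_countP (fun i => i ≠ j) (l := List.finRange m)
  have h2 := List.count_eq_one_of_mem (List.nodup_finRange m) (List.mem_finRange j)
  rw [List.count_eq_countP, List.countP_congr (q := fun a => decide ¬decide (a ≠ j) = true)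
    (by simp)] at h2
  rw [List.length_finRange, h2] at h1
  exact h1.symm

-- The exponent `m + 1` has the parity of `m - 1` without the truncated subtraction.
lemma eM_mul_e (j : Fin m) : eM m * e m j = (-1 : ℝ) ^ (m + 1) • (e m j * eM m) := by
  have hsign : (-1 : ℝ) ^ (m + 1) * (-1) ^ (List.finRange m).countP (· ≠ j) = 1 := by
    nth_rw 1 [← countP_finRange_ne_add_one j]
    rw [← pow_add]
    exact Even.neg_one_pow ⟨_ + 1, by ring⟩
  rw [eM, e_mul_prod_map_e, smul_smul, hsign, one_smul]

lemma involute_mul_eM_mul_e (w : Cl m) (j : Fin m) :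
    involute (w * eM m) * e m j = -(involute w * e m j * eM m) := by
  rw [map_mul, involute_eM, mul_smul_comm, smul_mul_assoc, mul_assoc, eM_mul_e, mul_smul_comm,
    smul_smul, ← pow_add, Odd.neg_one_pow ⟨m, by ring⟩, neg_one_smul, mul_assoc]

lemma clGrade_zero : clGrade m 0 = Submodule.span ℝ {1} := by
  unfold clGrade
  congr 1
  ext x
  simp [List.length_eq_zero_iff]

lemma clGrade_self : clGrade m m = Submodule.span ℝ {eM m} := by
  apply le_antisymm
  · rw [clGrade, Submodule.span_le]
    rintro x ⟨l, hl, hnd, rfl⟩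
    have hperm : l.Perm (List.finRange m) :=
      (hnd.subperm fun x _ => List.mem_finRange x).perm_of_length_le (by simp [hl])
    rcases prod_map_e_eq_or_eq_neg_of_perm hperm hnd with h | h <;> rw [h]
    · exact Submodule.mem_span_singleton_self _
    · exact Submodule.neg_mem _ (Submodule.mem_span_singleton_self _)
  · rw [Submodule.span_singleton_le_iff_mem]
    exact Submodule.subset_span ⟨_, List.length_finRange, List.nodup_finRange m, rfl⟩

end Pseudoscalar

section Operators

variable {m : ℕ}

lemma wedgeL_apply (c v : Cl m) : wedgeL m c v = (1 / 2 : ℝ) • (c * v + involute v * c) := rfl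

lemma dotL_apply (c v : Cl m) : dotL m c v = (1 / 2 : ℝ) • (c * v - involute v * c) := rfl

lemma wedgeL_e_one (j : Fin m) : wedgeL m (e m j) 1 = e m j := by
  rw [wedgeL_apply, mul_one, map_one, one_mul, ← two_smul ℝ, smul_smul]
  norm_num

lemma dotL_e_e_self (j : Fin m) : dotL m (e m j) (e m j) = -1 := by
  rw [dotL_apply, involute_e, neg_mul, sub_neg_eq_add, e_mul_self, ← two_smul ℝ, smul_smul]
  norm_num

lemma dotL_e_e_of_ne {i j : Fin m} (h : i ≠ j) : dotL m (e m i) (e m j) = 0 := by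
  rw [dotL_apply, involute_e, neg_mul, sub_neg_eq_add, e_mul_e_of_ne h, neg_add_cancel,
    smul_zero]

lemma dotL_e_mul_eM (j : Fin m) (w : Cl m) :
    dotL m (e m j) (w * eM m) = wedgeL m (e m j) w * eM m := by
  rw [dotL_apply, wedgeL_apply, involute_mul_eM_mul_e, sub_neg_eq_add, ← mul_assoc,
    smul_mul_assoc, add_mul]

lemma dplus_tmul (p : Pm m) (c : Cl m) :
    dplus m (p ⊗ₜ c) = ∑ j, pderiv j p ⊗ₜ wedgeL m (e m j) c := by
  simp [dplus, op, LinearMap.sum_apply]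

lemma dminus_tmul (p : Pm m) (c : Cl m) :
    dminus m (p ⊗ₜ c) = ∑ j, pderiv j p ⊗ₜ dotL m (e m j) c := by
  simp [dminus, op, LinearMap.sum_apply]

lemma xDot_tmul (p : Pm m) (c : Cl m) :
    xDot m (p ⊗ₜ c) = ∑ j, (X j * p) ⊗ₜ dotL m (e m j) c := by
  simp [xDot, op, LinearMap.sum_apply]

lemma xDot_dplus_tmul_one (p : Pm m) :
    xDot m (dplus m (p ⊗ₜ 1)) = -((∑ j, X j * pderiv j p) ⊗ₜ[ℝ] (1 : Cl m)) := by
  simp only [dplus_tmul, wedgeL_e_one, map_sum, xDot_tmul, sum_tmul, ← Finset.sum_neg_distrib]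
  refine Finset.sum_congr rfl fun j _ => ?_
  rw [Finset.sum_eq_single j (fun i _ hij => by rw [dotL_e_e_of_ne hij, tmul_zero])
    (by simp), dotL_e_e_self, tmul_neg]

lemma dminus_comp_lTensor_mulRight_eM :
    dminus m ∘ₗ (LinearMap.mulRight ℝ (eM m)).lTensor (Pm m) =
      (LinearMap.mulRight ℝ (eM m)).lTensor (Pm m) ∘ₗ dplus m := by
  ext p c
  simp [dminus_tmul, dplus_tmul, dotL_e_mul_eM]

end Operators

section Vanishing

variable {m k s : ℕ}

lemma exists_tmul_of_mem_Pks {c : Cl m} (hc : clGrade m s ≤ Submodule.span ℝ {c}) {P : MS m}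
    (hP : P ∈ Pks m k s) : ∃ p : Pm m, p.IsHomogeneous k ∧ P = p ⊗ₜ c := by
  obtain ⟨t, rfl⟩ := hP
  induction t with
  | zero => exact ⟨0, isHomogeneous_zero _ _ _, by simp⟩
  | tmul q d =>
    obtain ⟨r, hr⟩ := Submodule.mem_span_singleton.mp (hc d.2)
    refine ⟨r • (q : Pm m), (mem_homogeneousSubmodule _ _).mp (Submodule.smul_mem _ r q.2), ?_⟩
    rw [map_tmul, Submodule.coe_subtype, Submodule.coe_subtype, ← hr, tmul_smul, smul_tmul']
  | add x y hx hy =>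
    obtain ⟨p, hp, hpx⟩ := hx
    obtain ⟨q, hq, hqy⟩ := hy
    exact ⟨p + q, hp.add hq, by rw [map_add, hpx, hqy, add_tmul]⟩

lemma tmul_one_eq_zero_of_dplus_eq_zero {p : Pm m} (hp : p.IsHomogeneous k) (hk : k ≠ 0)
    (h : dplus m (p ⊗ₜ 1) = 0) : p ⊗ₜ[ℝ] (1 : Cl m) = 0 := by
  have hEuler := xDot_dplus_tmul_one p
  rw [h, map_zero, hp.sum_X_mul_pderiv, ← Nat.cast_smul_eq_nsmul ℝ, ← smul_tmul', eq_comm,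
    neg_eq_zero] at hEuler
  exact (smul_eq_zero.mp hEuler).resolve_left (Nat.cast_ne_zero.mpr hk)

lemma tmul_eM_eq_zero_of_dminus_eq_zero {p : Pm m} (hp : p.IsHomogeneous k) (hk : k ≠ 0)
    (h : dminus m (p ⊗ₜ eM m) = 0) : p ⊗ₜ[ℝ] eM m = 0 := by
  set R := (LinearMap.mulRight ℝ (eM m)).lTensor (Pm m)
  have hR : Function.Injective R :=
    Module.Flat.lTensor_preserves_injective_linearMap (M := Pm m) _
      isUnit_eM.mul_left_injective
  have hp1 : p ⊗ₜ eM m = R (p ⊗ₜ 1) := by simp [R]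
  rw [hp1, ← LinearMap.comp_apply, dminus_comp_lTensor_mulRight_eM, LinearMap.comp_apply,
    ← map_zero R] at h
  rw [hp1, tmul_one_eq_zero_of_dplus_eq_zero hp hk (hR h), map_zero]

lemma Hks_zero_eq_span {c : Cl m} (hc : clGrade m s = Submodule.span ℝ {c}) :
    Hks m 0 s = Submodule.span ℝ {(1 : Pm m) ⊗ₜ c} := by
  apply le_antisymm
  · rintro P ⟨⟨hP, -⟩, -⟩
    obtain ⟨p, hp, rfl⟩ := exists_tmul_of_mem_Pks hc.le hP
    rw [totalDegree_eq_zero_iff_eq_C.mp ((totalDegree_zero_iff_isHomogeneous _).mpr hp),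
      C_eq_smul_one, ← smul_tmul']
    exact Submodule.smul_mem _ _ (Submodule.mem_span_singleton_self _)
  · rw [Submodule.span_singleton_le_iff_mem]
    have hc' : c ∈ clGrade m s := hc.ge (Submodule.mem_span_singleton_self c)
    refine ⟨⟨⟨⟨1, isHomogeneous_one _ _⟩ ⊗ₜ ⟨c, hc'⟩, rfl⟩, ?_⟩, ?_⟩ <;>
      simp [dplus_tmul, dminus_tmul]

end Vanishing

/-- if P ∈ H_k^s with s ∈ {0,m} and k ≥ 1 then P = 0; moreover
H_0^0 = ℝ·1 and H_0^m = ℝ·e_M with e_M = e₁e₂⋯e_m. -/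
theorem stmt15 (m k s : ℕ) :
    (∀ P ∈ Pks m k s, (s = 0 ∨ s = m) → 1 ≤ k →
      dplus m P = 0 → dminus m P = 0 → P = 0) ∧
    Hks m 0 0 = Submodule.span ℝ {((1 : Pm m) ⊗ₜ[ℝ] (1 : Cl m) : MS m)} ∧
    Hks m 0 m = Submodule.span ℝ
      {((1 : Pm m) ⊗ₜ[ℝ] (((List.finRange m).map (e m)).prod) : MS m)} := by
  refine ⟨?_, Hks_zero_eq_span clGrade_zero, Hks_zero_eq_span clGrade_self⟩
  rintro P hP (rfl | rfl) hk hdplus hdminus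
  · obtain ⟨p, hp, rfl⟩ := exists_tmul_of_mem_Pks clGrade_zero.le hP
    exact tmul_one_eq_zero_of_dplus_eq_zero hp (Nat.one_le_iff_ne_zero.mp hk) hdplus
  · obtain ⟨p, hp, rfl⟩ := exists_tmul_of_mem_Pks clGrade_self.le hP
    exact tmul_eM_eq_zero_of_dminus_eq_zero hp (Nat.one_le_iff_ne_zero.mp hk) hdminus
end
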